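/- arXiv:1711.01328 — 4 statements merged into one kernel-verified Lean document; each statement's English description precedes it below -/
import Mathlib

section
/- For p ≥ 2 and t > 0, the sup-norm distance between f_t and s ↦ |s|^p equals (p/2 - 1) t^p, i.e., sup_{s ∈ ℝ} |f_t(s) - |s|^p| = (p/2 - 1) t^p. -/
noncomputable def ft (p t s : ℝ) : ℝ :=
  if |s| ≤ t then (p / 2) * t ^ (p - 2) * s ^ 2
  else |s| ^ p + (p / 2 - 1) * t ^ p

theorem ft_sup_dist (p t : ℝ) (hp : 2 ≤ p) (ht : 0 < t) :
    (⨆ s : ℝ, |ft p t s - |s| ^ p|) = (p / 2 - 1) * t ^ p := by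
  have hp2 : (1:ℝ) ≤ p / 2 := by linarith
  have hM : 0 ≤ (p / 2 - 1) * t ^ p := by
    have := Real.rpow_pos_of_pos ht p
    nlinarith
  have htp : t ^ p = t ^ (p - 2) * t ^ 2 := by
    rw [← Real.rpow_natCast t 2, ← Real.rpow_add ht]
    norm_num
  have ht2 : (0:ℝ) < t ^ (p - 2) := Real.rpow_pos_of_pos ht _
  have key : ∀ s : ℝ, |ft p t s - |s| ^ p| ≤ (p / 2 - 1) * t ^ p := by
    intro s
    unfold ft
    split_ifs with h
    · -- |s| ≤ t
      have hs0 : (0:ℝ) ≤ |s| := abs_nonneg s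
      have hsp : |s| ^ p = |s| ^ (p - 2) * s ^ 2 := by
        rw [← sq_abs s, ← Real.rpow_natCast |s| 2,
          ← Real.rpow_add' hs0 (by push_cast; intro h0; linarith)]
        push_cast
        ring_nf
      have hlow : |s| ^ p ≤ p / 2 * t ^ (p - 2) * s ^ 2 := by
        rw [hsp]
        have h1 : |s| ^ (p - 2) ≤ t ^ (p - 2) :=
          Real.rpow_le_rpow hs0 h (by linarith)
        nlinarith [mul_le_mul_of_nonneg_right h1 (sq_nonneg s), sq_nonneg s, ht2.le, mul_nonneg ht2.le (sq_nonneg s)]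
      rw [abs_of_nonneg (by linarith)]
      -- Bernoulli: 1 + q*(b-1) ≤ b^q with b = s^2/t^2, q = p/2
      have hb : (0:ℝ) ≤ s ^ 2 / t ^ 2 := by positivity
      have hber := one_add_mul_self_le_rpow_one_add
        (s := s ^ 2 / t ^ 2 - 1) (by linarith) hp2
      have hbq : (1 + (s ^ 2 / t ^ 2 - 1)) ^ (p / 2) = |s| ^ p / t ^ p := by
        have : (1:ℝ) + (s ^ 2 / t ^ 2 - 1) = s ^ 2 / t ^ 2 := by ring
        rw [this, Real.div_rpow (sq_nonneg s) (sq_nonneg t),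
          ← sq_abs s, ← Real.rpow_natCast |s| 2, ← Real.rpow_natCast t 2,
          ← Real.rpow_mul hs0, ← Real.rpow_mul ht.le]
        push_cast
        ring_nf
      rw [hbq] at hber
      have htp0 : (0:ℝ) < t ^ p := Real.rpow_pos_of_pos ht _
      have ht20 : (0:ℝ) < t ^ 2 := by positivity
      have := mul_le_mul_of_nonneg_right hber htp0.le
      rw [div_mul_cancel₀ _ htp0.ne'] at this
      have hrw : (1 + p / 2 * (s ^ 2 / t ^ 2 - 1)) * t ^ p
          = t ^ p + p / 2 * (s ^ 2 * t ^ (p - 2) - t ^ p) := by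
        rw [htp]; field_simp
      rw [hrw] at this
      nlinarith
    · rw [add_sub_cancel_left, abs_of_nonneg hM]
  have hmem : IsGreatest (Set.range fun s : ℝ => |ft p t s - |s| ^ p|)
      ((p / 2 - 1) * t ^ p) := by
    constructor
    · refine ⟨2 * t, ?_⟩
      have h2t : ¬ |2 * t| ≤ t := by
        rw [abs_of_pos (by linarith)]; linarith
      simp only [ft, if_neg h2t, add_sub_cancel_left, abs_of_nonneg hM]
    · rintro x ⟨s, rfl⟩; exact key s
  rw [iSup]
  exact hmem.csSup_eq
end

section
/- For p > 2 and t > 0, the function f_t is convex on ℝ. -/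
/-! The profile `ftProfile p t` (the formula of `ft` with `|s|` replaced by `s`) has a single
break point at `t`, where its quadratic and power pieces share the value `(p/2) t^p` and the slope
`p t^(p-1)`; hence it is differentiable with derivative `p max(r, t)^(p-2) r`. Since `ft` agrees
with it on `[-t, ∞)` and is even, `ft` is differentiable with derivative `p max(|s|, t)^(p-2) s`,
which is nondecreasing because `p > 2`. -/

open Real Set Filter

theorem HasDerivAt.ite_le {g h : ℝ → ℝ} {a d : ℝ} (hg : HasDerivAt g d a)
    (hh : HasDerivAt h d a) (hgh : g a = h a) :
    HasDerivAt (fun x => if x ≤ a then g x else h x) d a := by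
  have hle : HasDerivWithinAt (fun x => if x ≤ a then g x else h x) d (Iic a) a :=
    hg.hasDerivWithinAt.congr (fun x hx => if_pos hx) (if_pos le_rfl)
  have hge : HasDerivWithinAt (fun x => if x ≤ a then g x else h x) d (Ici a) a := by
    refine hh.hasDerivWithinAt.congr (fun x hx => ?_) (by simp [hgh])
    rcases (mem_Ici.mp hx).eq_or_lt with rfl | hlt
    · simp [hgh]
    · simp [not_le.mpr hlt]
  simpa [Iic_union_Ici] using hle.union hge

theorem MonotoneOn.monotone_apply_abs_mul {v : ℝ → ℝ} (hv : MonotoneOn v (Ici 0))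
    (hv₀ : ∀ r, 0 ≤ r → 0 ≤ v r) : Monotone fun x => v |x| * x := by
  intro a b hab
  rcases le_total 0 a with ha | ha
  · have hb : 0 ≤ b := ha.trans hab
    have hvab : v |a| ≤ v |b| := by
      rw [abs_of_nonneg ha, abs_of_nonneg hb]
      exact hv ha hb hab
    calc v |a| * a ≤ v |b| * a := mul_le_mul_of_nonneg_right hvab ha
      _ ≤ v |b| * b := mul_le_mul_of_nonneg_left hab (hv₀ _ (abs_nonneg b))
  rcases le_total 0 b with hb | hb
  · calc v |a| * a ≤ 0 := mul_nonpos_of_nonneg_of_nonpos (hv₀ _ (abs_nonneg a)) ha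
      _ ≤ v |b| * b := mul_nonneg (hv₀ _ (abs_nonneg b)) hb
  · have hvba : v |b| ≤ v |a| := by
      rw [abs_of_nonpos ha, abs_of_nonpos hb]
      exact hv (neg_nonneg.mpr hb) (neg_nonneg.mpr ha) (neg_le_neg hab)
    calc v |a| * a ≤ v |a| * b := mul_le_mul_of_nonneg_left hab (hv₀ _ (abs_nonneg a))
      _ ≤ v |b| * b := mul_le_mul_of_nonpos_right hvba hb

noncomputable def ftProfile (p t r : ℝ) : ℝ :=
  if r ≤ t then (p / 2) * t ^ (p - 2) * r ^ 2 else r ^ p + (p / 2 - 1) * t ^ p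

theorem ft_neg (p t s : ℝ) : ft p t (-s) = ft p t s := by
  simp only [ft, abs_neg, neg_sq]

theorem ft_eq_ftProfile {p t s : ℝ} (hs : -t ≤ s) : ft p t s = ftProfile p t s := by
  rcases le_total 0 s with h | h
  · simp only [ft, ftProfile, abs_of_nonneg h]
  · have hst : s ≤ t := by linarith
    have hst' : |s| ≤ t := by rw [abs_of_nonpos h]; linarith
    simp only [ft, ftProfile, if_pos hst, if_pos hst']

theorem hasDerivAt_ftProfile (p : ℝ) {t : ℝ} (ht : 0 < t) (r : ℝ) :
    HasDerivAt (ftProfile p t) (p * max r t ^ (p - 2) * r) r := by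
  have hquad (x : ℝ) : HasDerivAt (fun y => (p / 2) * t ^ (p - 2) * y ^ 2)
      (p * t ^ (p - 2) * x) x := by
    refine ((hasDerivAt_pow 2 x).const_mul ((p / 2) * t ^ (p - 2))).congr_deriv ?_
    norm_num
    ring
  have hpow {x : ℝ} (hx : 0 < x) : HasDerivAt (fun y => y ^ p + (p / 2 - 1) * t ^ p)
      (p * x ^ (p - 2) * x) x := by
    refine ((hasDerivAt_rpow_const (p := p) (Or.inl hx.ne')).add_const _).congr_deriv ?_
    rw [mul_assoc, ← rpow_add_one hx.ne']
    ring_nf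
  rcases lt_trichotomy r t with h | rfl | h
  · rw [max_eq_right h.le]
    refine (hquad r).congr_of_eventuallyEq ?_
    filter_upwards [Iio_mem_nhds h] with x hx
    exact if_pos hx.le
  · rw [max_self]
    refine (hquad r).ite_le (hpow ht) ?_
    have : r ^ (p - 2) * r ^ 2 = r ^ p := by
      rw [← rpow_natCast, ← rpow_add ht]
      norm_num
    rw [mul_assoc, this]
    ring
  · rw [max_eq_left h.le]
    refine (hpow (ht.trans h)).congr_of_eventuallyEq ?_
    filter_upwards [Ioi_mem_nhds h] with x hx
    exact if_neg (not_le.mpr hx)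

theorem hasDerivAt_ft_of_neg_lt (p : ℝ) {t s : ℝ} (ht : 0 < t) (hs : -t < s) :
    HasDerivAt (ft p t) (p * max |s| t ^ (p - 2) * s) s := by
  have hmax : max |s| t = max s t := by
    rcases abs_cases s with ⟨h, -⟩ | ⟨h, hneg⟩
    · rw [h]
    · rw [h, max_eq_right (by linarith), max_eq_right (by linarith)]
  rw [hmax]
  refine (hasDerivAt_ftProfile p ht s).congr_of_eventuallyEq ?_
  filter_upwards [Ioi_mem_nhds hs] with x hx
  exact ft_eq_ftProfile hx.le

theorem hasDerivAt_ft (p : ℝ) {t : ℝ} (ht : 0 < t) (s : ℝ) :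
    HasDerivAt (ft p t) (p * max |s| t ^ (p - 2) * s) s := by
  rcases lt_or_ge (-t) s with hs | hs
  · exact hasDerivAt_ft_of_neg_lt p ht hs
  · have h := (hasDerivAt_ft_of_neg_lt p ht (by linarith : -t < -s)).comp s (hasDerivAt_neg s)
    rw [show ft p t ∘ Neg.neg = ft p t from funext (ft_neg p t), abs_neg] at h
    exact h.congr_deriv (by ring)

theorem ft_convex (p t : ℝ) (hp : 2 < p) (ht : 0 < t) :
    ConvexOn ℝ Set.univ (fun s => ft p t s) := by
  have hderiv : deriv (ft p t) = fun s => p * max |s| t ^ (p - 2) * s :=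
    funext fun s => (hasDerivAt_ft p ht s).deriv
  refine Monotone.convexOn_univ_of_deriv (fun s => (hasDerivAt_ft p ht s).differentiableAt) ?_
  rw [hderiv]
  refine MonotoneOn.monotone_apply_abs_mul (v := fun r => p * max r t ^ (p - 2)) ?_ ?_
  · intro a _ b _ hab
    have := rpow_le_rpow (ht.le.trans (le_max_right a t)) (max_le_max_right t hab)
      (by linarith : 0 ≤ p - 2)
    exact mul_le_mul_of_nonneg_left this (by linarith)
  · intro r _
    have := rpow_nonneg (ht.le.trans (le_max_right r t)) (p - 2)
    positivity
end

section
/- Let A be an n×d real matrix, b ∈ ℝ^n, c ∈ ℝ^d with c in the orthogonal complement of ker(A), and p ≥ 2. For any t ≥ 0 and any minimizer x(t) of x ↦ c·x + Σ_i f_t((Ax - b)_i) over x ∈ ker(A)^⊥, one has c·x(t) + ‖Ax(t) - b‖_p^p ≤ n(p/2 - 1)t^p + min_{x ∈ ℝ^d} (c·x + ‖Ax - b‖_p^p), where f_t(s) = (p/2)t^{p-2}s² for |s| ≤ t and |s|^p + (p/2 - 1)t^p otherwise. -/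
open Matrix

/-!
Proof idea: `ft p t` is sandwiched between `|s| ^ p` and `|s| ^ p + (p / 2 - 1) * t ^ p`; the upper
bound is the weighted AM-GM inequality with weights `2 / p` and `1 - 2 / p`. Since `c ⊥ ker A`,
moving any competitor `x` to its component in `(ker A)ᗮ` changes neither `A x` nor `c ⬝ᵥ x`, so it
becomes admissible for `x(t)`, and the two bounds compare the two objectives up to `n` copies of
`(p / 2 - 1) * t ^ p`.
-/

lemma abs_rpow_le_ft {p t : ℝ} (hp : 2 ≤ p) (ht : 0 ≤ t) (s : ℝ) : |s| ^ p ≤ ft p t s := by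
  unfold ft
  split_ifs with hst
  · have hsplit : |s| ^ p = |s| ^ (p - 2) * s ^ 2 := by
      rw [← sq_abs s, ← Real.rpow_two, ← Real.rpow_add' (abs_nonneg s) (by linarith)]
      ring_nf
    calc |s| ^ p = |s| ^ (p - 2) * s ^ 2 := hsplit
      _ ≤ t ^ (p - 2) * s ^ 2 := by
        gcongr
      _ ≤ (p / 2) * t ^ (p - 2) * s ^ 2 := by
        rw [mul_assoc]
        exact le_mul_of_one_le_left (by positivity [(abs_nonneg s).trans hst]) (by linarith)
  · have : 0 ≤ (p / 2 - 1) * t ^ p := mul_nonneg (by linarith) (Real.rpow_nonneg ht p)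
    linarith

lemma half_mul_rpow_sub_two_mul_sq_le {p t : ℝ} (hp : 2 ≤ p) (ht : 0 ≤ t) (s : ℝ) :
    (p / 2) * t ^ (p - 2) * s ^ 2 ≤ |s| ^ p + (p / 2 - 1) * t ^ p := by
  have hp0 : 0 < p := by linarith
  have amgm := Real.geom_mean_le_arith_mean2_weighted (w₁ := 2 / p) (w₂ := 1 - 2 / p)
    (by positivity) (by rw [sub_nonneg, div_le_one hp0]; linarith)
    (Real.rpow_nonneg (abs_nonneg s) p) (Real.rpow_nonneg ht p) (by ring)
  have hgeom : (|s| ^ p) ^ (2 / p) * (t ^ p) ^ (1 - 2 / p) = s ^ 2 * t ^ (p - 2) := by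
    rw [← Real.rpow_mul (abs_nonneg s), ← Real.rpow_mul ht, mul_div_cancel₀ _ hp0.ne',
      mul_one_sub, mul_div_cancel₀ _ hp0.ne', Real.rpow_two, sq_abs]
  rw [hgeom] at amgm
  calc (p / 2) * t ^ (p - 2) * s ^ 2 = (p / 2) * (s ^ 2 * t ^ (p - 2)) := by ring
    _ ≤ (p / 2) * (2 / p * |s| ^ p + (1 - 2 / p) * t ^ p) := by gcongr
    _ = |s| ^ p + (p / 2 - 1) * t ^ p := by field_simp

lemma ft_le_abs_rpow_add {p t : ℝ} (hp : 2 ≤ p) (ht : 0 ≤ t) (s : ℝ) :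
    ft p t s ≤ |s| ^ p + (p / 2 - 1) * t ^ p := by
  unfold ft
  split_ifs
  · exact half_mul_rpow_sub_two_mul_sq_le hp ht s
  · exact le_rfl

lemma Matrix.exists_mem_orthogonal_ker_mulVec_sub_eq_zero {m ι : Type*} [Fintype ι]
    (A : Matrix m ι ℝ) (x : ι → ℝ) :
    ∃ y : ι → ℝ, (∀ v : ι → ℝ, A *ᵥ v = 0 → y ⬝ᵥ v = 0) ∧ A *ᵥ (x - y) = 0 := by
  let K : Submodule ℝ (EuclideanSpace ℝ ι) :=
    LinearMap.ker (A.mulVecLin ∘ₗ (WithLp.linearEquiv 2 ℝ (ι → ℝ)).toLinearMap)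
  obtain ⟨k, hk, y, hy, hxky⟩ := K.exists_add_mem_mem_orthogonal (WithLp.toLp 2 x)
  refine ⟨y.ofLp, fun v hv => ?_, ?_⟩
  · have hvK : WithLp.toLp 2 v ∈ K := by simpa [K] using hv
    simpa [dotProduct, PiLp.inner_apply, mul_comm] using (K.mem_orthogonal y).mp hy _ hvK
  · have hx : x = k.ofLp + y.ofLp := by simpa using congrArg WithLp.ofLp hxky
    simpa [hx, K] using hk

theorem homotopy_approx_general {n d : ℕ} (A : Matrix (Fin n) (Fin d) ℝ)
    (b : Fin n → ℝ) (c : Fin d → ℝ) (p t : ℝ) (hp : 2 ≤ p) (ht : 0 ≤ t)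
    (hc : ∀ v : Fin d → ℝ, A.mulVec v = 0 → c ⬝ᵥ v = 0)
    (xt xstar : Fin d → ℝ)
    (hxt : IsMinOn (fun x => c ⬝ᵥ x + ∑ i, ft p t ((A.mulVec x - b) i))
      {x | ∀ v : Fin d → ℝ, A.mulVec v = 0 → x ⬝ᵥ v = 0} xt) :
    c ⬝ᵥ xt + ∑ i, |(A.mulVec xt - b) i| ^ p
      ≤ n * (p / 2 - 1) * t ^ p
        + (c ⬝ᵥ xstar + ∑ i, |(A.mulVec xstar - b) i| ^ p) := by
  obtain ⟨y, hy, hAy⟩ := A.exists_mem_orthogonal_ker_mulVec_sub_eq_zero xstar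
  have hAy' : A *ᵥ y = A *ᵥ xstar := (sub_eq_zero.mp (by rwa [mulVec_sub] at hAy)).symm
  have hcy : c ⬝ᵥ y = c ⬝ᵥ xstar := (sub_eq_zero.mp (by rw [← dotProduct_sub]; exact hc _ hAy)).symm
  calc c ⬝ᵥ xt + ∑ i, |(A *ᵥ xt - b) i| ^ p ≤ c ⬝ᵥ xt + ∑ i, ft p t ((A *ᵥ xt - b) i) := by
        gcongr; exact abs_rpow_le_ft hp ht _
    _ ≤ c ⬝ᵥ y + ∑ i, ft p t ((A *ᵥ y - b) i) := hxt hy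
    _ ≤ c ⬝ᵥ xstar + ∑ i, (|(A *ᵥ xstar - b) i| ^ p + (p / 2 - 1) * t ^ p) := by
        rw [hcy, hAy']; gcongr; exact ft_le_abs_rpow_add hp ht _
    _ = n * (p / 2 - 1) * t ^ p + (c ⬝ᵥ xstar + ∑ i, |(A *ᵥ xstar - b) i| ^ p) := by
        simp only [Finset.sum_add_distrib, Finset.sum_const, Finset.card_univ, Fintype.card_fin,
          nsmul_eq_mul]
        ring

theorem homotopy_approx {n d : ℕ} (A : Matrix (Fin n) (Fin d) ℝ)
    (b : Fin n → ℝ) (c : Fin d → ℝ) (p t : ℝ) (hp : 2 ≤ p) (ht : 0 ≤ t)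
    (hc : ∀ v : Fin d → ℝ, A.mulVec v = 0 → c ⬝ᵥ v = 0)
    (xt xstar : Fin d → ℝ)
    (hxt_mem : ∀ v : Fin d → ℝ, A.mulVec v = 0 → xt ⬝ᵥ v = 0)
    (hxt : IsMinOn (fun x => c ⬝ᵥ x + ∑ i, ft p t ((A.mulVec x - b) i))
      {x | ∀ v : Fin d → ℝ, A.mulVec v = 0 → x ⬝ᵥ v = 0} xt)
    (hxstar : IsMinOn (fun x => c ⬝ᵥ x + ∑ i, |(A.mulVec x - b) i| ^ p)
      Set.univ xstar) :
    c ⬝ᵥ xt + ∑ i, |(A.mulVec xt - b) i| ^ p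
      ≤ n * (p / 2 - 1) * t ^ p
        + (c ⬝ᵥ xstar + ∑ i, |(A.mulVec xstar - b) i| ^ p) :=
  homotopy_approx_general A b c p t hp ht hc xt xstar hxt
end

section
/- Let D and W be diagonal n×n positive semidefinite matrices and A ∈ ℝ^{n×d} such that (1/2) Aᵀ D A ⪯ Aᵀ W A ⪯ 2 Aᵀ D A. Then for every row aᵢ of A, aᵢᵀ (Aᵀ W A)^† aᵢ ≤ 2 aᵢᵀ (Aᵀ D A)^† aᵢ. -/
/-! Put `y = N⁺ a` and `u = M⁺ a`. Since `a` lies in the range of `M`, `M u = a`, and the Penrose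
identities give `yᵀ N y = aᵀ y`. From `N ⪰ c M` we get `c² yᵀ M y ≤ c yᵀ N y = c aᵀ y`, while
`M ⪰ 0` evaluated at `c y - u` gives `0 ≤ c² yᵀ M y - 2c aᵀ y + aᵀ u`. Adding the two yields
`c aᵀ N⁺ a ≤ aᵀ M⁺ a`; the theorem is the case `c = 1/2`. -/

open Matrix

/-- `B` is the Moore–Penrose pseudoinverse of `M` (Penrose conditions). -/
def IsMPInv {d : ℕ} (M B : Matrix (Fin d) (Fin d) ℝ) : Prop :=
  M * B * M = M ∧ B * M * B = B ∧ (M * B)ᵀ = M * B ∧ (B * M)ᵀ = B * M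

namespace IsMPInv

variable {d : ℕ} {M B : Matrix (Fin d) (Fin d) ℝ}

theorem unique {B' : Matrix (Fin d) (Fin d) ℝ} (h : IsMPInv M B) (h' : IsMPInv M B') :
    B = B' := by
  obtain ⟨hMBM, hBMB, hMB, hBM⟩ := h
  obtain ⟨hMBM', hBMB', hMB', hBM'⟩ := h'
  have left : M * B = M * B' :=
    calc M * B = (M * B)ᵀ := hMB.symm
      _ = (M * B' * (M * B))ᵀ := by rw [← mul_assoc, hMBM']
      _ = M * B * (M * B') := by rw [transpose_mul, hMB, hMB']
      _ = M * B' := by rw [← mul_assoc, hMBM]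
  have right : B * M = B' * M :=
    calc B * M = (B * M)ᵀ := hBM.symm
      _ = (B * M * (B' * M))ᵀ := by rw [mul_assoc B, ← mul_assoc M, hMBM']
      _ = B' * M * (B * M) := by rw [transpose_mul, hBM, hBM']
      _ = B' * M := by rw [mul_assoc B', ← mul_assoc M, hMBM]
  calc B = B * (M * B') := by rw [← left, ← mul_assoc, hBMB]
    _ = B' := by rw [← mul_assoc, right, hBMB']

theorem transpose (h : IsMPInv M B) : IsMPInv Mᵀ Bᵀ := by
  obtain ⟨hMBM, hBMB, hMB, hBM⟩ := h
  refine ⟨?_, ?_, ?_, ?_⟩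
  · rw [← transpose_mul, ← transpose_mul, ← mul_assoc, hMBM]
  · rw [← transpose_mul, ← transpose_mul, ← mul_assoc, hBMB]
  · rw [← transpose_mul, transpose_transpose, hBM]
  · rw [← transpose_mul, transpose_transpose, hMB]

theorem isSymm (hM : M.IsSymm) (h : IsMPInv M B) : B.IsSymm :=
  (hM.eq ▸ h.transpose).unique h

theorem mulVec_mulVec_of_exists_mulVec_eq (h : IsMPInv M B) {a : Fin d → ℝ}
    (ha : ∃ z, M *ᵥ z = a) : M *ᵥ B *ᵥ a = a := by
  obtain ⟨z, rfl⟩ := ha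
  rw [mulVec_mulVec, mulVec_mulVec, h.1]

theorem dotProduct_mulVec_mulVec (hM : M.IsSymm) (h : IsMPInv M B) (a : Fin d → ℝ) :
    B *ᵥ a ⬝ᵥ M *ᵥ B *ᵥ a = a ⬝ᵥ B *ᵥ a := by
  calc B *ᵥ a ⬝ᵥ M *ᵥ B *ᵥ a = a ⬝ᵥ Bᵀ *ᵥ M *ᵥ B *ᵥ a := by
        rw [dotProduct_transpose_mulVec, dotProduct_comm]
    _ = a ⬝ᵥ (B * M * B) *ᵥ a := by
        rw [(h.isSymm hM).eq, mulVec_mulVec, mulVec_mulVec, mul_assoc]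
    _ = a ⬝ᵥ B *ᵥ a := by rw [h.2.1]

end IsMPInv

theorem IsMPInv.mul_dotProduct_mulVec_le {d : ℕ} {M N BM BN : Matrix (Fin d) (Fin d) ℝ}
    {c : ℝ} (hc : 0 ≤ c) (hM : M.PosSemidef) (hN : N.IsSymm) (hNM : (N - c • M).PosSemidef)
    (hBM : IsMPInv M BM) (hBN : IsMPInv N BN) {a : Fin d → ℝ} (ha : ∃ z, M *ᵥ z = a) :
    c * (a ⬝ᵥ BN *ᵥ a) ≤ a ⬝ᵥ BM *ᵥ a := by
  set y := BN *ᵥ a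
  set u := BM *ᵥ a
  have hMsymm : M.IsSymm := isHermitian_iff_isSymm.mp hM.isHermitian
  have hMu : M *ᵥ u = a := hBM.mulVec_mulVec_of_exists_mulVec_eq ha
  have hNy : y ⬝ᵥ N *ᵥ y = a ⬝ᵥ y := hBN.dotProduct_mulVec_mulVec hN a
  have hyMy : c * (y ⬝ᵥ M *ᵥ y) ≤ a ⬝ᵥ y := by
    have := hNM.dotProduct_mulVec_nonneg y
    rw [star_trivial, sub_mulVec, smul_mulVec, dotProduct_sub, dotProduct_smul,
      smul_eq_mul] at this
    linarith
  have hsq : 0 ≤ c ^ 2 * (y ⬝ᵥ M *ᵥ y) - 2 * c * (a ⬝ᵥ y) + a ⬝ᵥ u := by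
    have := hM.dotProduct_mulVec_nonneg (c • y - u)
    have huy : u ⬝ᵥ M *ᵥ y = a ⬝ᵥ y := by
      rw [← hMsymm.eq, dotProduct_transpose_mulVec, hMu, dotProduct_comm]
    have hyu : y ⬝ᵥ M *ᵥ u = a ⬝ᵥ y := by rw [hMu, dotProduct_comm]
    have huu : u ⬝ᵥ M *ᵥ u = a ⬝ᵥ u := by rw [hMu, dotProduct_comm]
    simp only [star_trivial, mulVec_sub, mulVec_smul, dotProduct_sub, sub_dotProduct,
      dotProduct_smul, smul_dotProduct, smul_eq_mul, huy, hyu, huu] at this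
    linarith
  linarith [mul_le_mul_of_nonneg_left hyMy hc]

theorem sparsifier_leverage_general {n d : ℕ} (A : Matrix (Fin n) (Fin d) ℝ)
    (dvec wvec : Fin n → ℝ) (hd : ∀ i, 0 ≤ dvec i)
    (hlow : (Aᵀ * Matrix.diagonal wvec * A
      - (1 / 2 : ℝ) • (Aᵀ * Matrix.diagonal dvec * A)).PosSemidef)
    (BD BW : Matrix (Fin d) (Fin d) ℝ)
    (hBD : IsMPInv (Aᵀ * Matrix.diagonal dvec * A) BD)
    (hBW : IsMPInv (Aᵀ * Matrix.diagonal wvec * A) BW)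
    (i : Fin n)
    (hrange : ∃ z : Fin d → ℝ, (Aᵀ * Matrix.diagonal dvec * A).mulVec z = A i) :
    A i ⬝ᵥ BW.mulVec (A i) ≤ 2 * (A i ⬝ᵥ BD.mulVec (A i)) := by
  have hD : (Aᵀ * diagonal dvec * A).PosSemidef := by
    simpa using (PosSemidef.diagonal hd).conjTranspose_mul_mul_same A
  have hW : (Aᵀ * diagonal wvec * A).IsSymm := by
    simp only [IsSymm, transpose_mul, transpose_transpose, diagonal_transpose, Matrix.mul_assoc]
  have := hBD.mul_dotProduct_mulVec_le (by norm_num) hD hW hlow hBW hrange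
  linarith

theorem sparsifier_leverage {n d : ℕ} (A : Matrix (Fin n) (Fin d) ℝ)
    (dvec wvec : Fin n → ℝ) (hd : ∀ i, 0 ≤ dvec i) (hw : ∀ i, 0 ≤ wvec i)
    (hlow : (Aᵀ * Matrix.diagonal wvec * A
      - (1 / 2 : ℝ) • (Aᵀ * Matrix.diagonal dvec * A)).PosSemidef)
    (hhigh : ((2 : ℝ) • (Aᵀ * Matrix.diagonal dvec * A)
      - Aᵀ * Matrix.diagonal wvec * A).PosSemidef)
    (BD BW : Matrix (Fin d) (Fin d) ℝ)
    (hBD : IsMPInv (Aᵀ * Matrix.diagonal dvec * A) BD)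
    (hBW : IsMPInv (Aᵀ * Matrix.diagonal wvec * A) BW)
    (i : Fin n)
    (hrange : ∃ z : Fin d → ℝ, (Aᵀ * Matrix.diagonal dvec * A).mulVec z = A i) :
    A i ⬝ᵥ BW.mulVec (A i) ≤ 2 * (A i ⬝ᵥ BD.mulVec (A i)) :=
  sparsifier_leverage_general A dvec wvec hd hlow BD BW hBD hBW i hrange
end
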